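/- Let σ be an intersection policy that is cyclic with cycle length k and non-excluding, and define next by next(h) = ⌊|h|/k⌋ mod |L_in|. Then the pair (σ, next) is fair. -/

import Mathlib

open scoped Classical

noncomputable section

namespace Inter

/-- Actions available to each agent. -/
inductive Act where
  | go
  | noop
deriving DecidableEq

/-- A move through the intersection: an incoming lane paired with an outgoing lane. -/
abbrev Move (kin kout : ℕ) := Fin kin × Fin kout

/-- An adversary: a conflict-free arrival schedule, a transmission environment and
transmitter/receiver failure functions. -/
structure Adversary (kin kout : ℕ) where
  arrive : ℕ → ℕ × Fin kin × Fin kout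
  conflictFree : ∀ i j : ℕ, i ≠ j → (arrive i).1 = (arrive j).1 →
    (arrive i).2.1 ≠ (arrive j).2.1
  T : Set ((Fin kin × ℕ) × (Fin kin × ℕ))
  T_front : ∀ l l' : Fin kin, ((l, 0), (l', 0)) ∈ T
  Ft : ℕ → ℕ → Bool
  Fr : ℕ → ℕ → Bool

/-- The lane component of a sensor reading: an incoming lane, ⊥ (not yet arrived),
or ⊤ (departed). -/
inductive LaneStatus (kin : ℕ) where
  | inLane (l : Fin kin)
  | notArrived
  | finished

/-- The minimal sensor reading: front, lane and intent. -/
structure Reading (kin kout : ℕ) where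
  front : Prop
  lane : LaneStatus kin
  intent : Fin kout

/-- Environment states record the adversary, the time, a queue for each incoming lane
and the set of departed agents. -/
structure EnvState (kin kout : ℕ) where
  adv : Adversary kin kout
  time : ℕ
  queue : Fin kin → List ℕ
  done : Set ℕ

/-- Local states: a memory state together with a sensor reading
(the minimal reading plus possibly extra sensor information). -/
abbrev LState (kin kout : ℕ) (Mem Extra : Type*) := Mem × Reading kin kout × Extra

/-- Global states: an environment state and local states for all agents. -/
abbrev GState (kin kout : ℕ) (Mem Extra : Type*) :=
  EnvState kin kout × (ℕ → LState kin kout Mem Extra)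

/-- A run. -/
abbrev Run (kin kout : ℕ) (Mem Extra : Type*) := ℕ → GState kin kout Mem Extra

/-- An action protocol maps each agent's local state to an action. -/
abbrev Prot (kin kout : ℕ) (Mem Extra : Type*) := ℕ → LState kin kout Mem Extra → Act

variable {kin kout : ℕ} {Mem Extra Msg : Type*}

/-- Agent `i` is at the front of some queue. -/
def isFront (e : EnvState kin kout) (i : ℕ) : Prop :=
  ∃ l : Fin kin, (e.queue l).head? = some i

/-- The (lane, position) of agent `i`, if it is in some queue. -/
def posAt (e : EnvState kin kout) (i : ℕ) : Option (Fin kin × ℕ) :=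
  if h : ∃ l : Fin kin, i ∈ e.queue l then some (h.choose, (e.queue h.choose).idxOf i)
  else none

/-- The intended departure lane of agent `i`, as given by the arrival schedule. -/
def intentOf (e : EnvState kin kout) (i : ℕ) : Fin kout := (e.adv.arrive i).2.2

/-- The move `(lane_i, intent_i)` of agent `i`, if it is in some queue. -/
def moveAt (e : EnvState kin kout) (i : ℕ) : Option (Move kin kout) :=
  (posAt e i).map (fun p => (p.1, intentOf e i))

/-- The minimal sensor reading of agent `i` in environment state `e`. -/
def minimalReading (e : EnvState kin kout) (i : ℕ) : Reading kin kout where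
  front := isFront e i
  lane :=
    if h : ∃ l : Fin kin, i ∈ e.queue l then LaneStatus.inLane h.choose
    else if i ∈ e.done then LaneStatus.finished else LaneStatus.notArrived
  intent := intentOf e i

/-- An information-exchange protocol: initial memories, extra sensor information,
a message function and a memory-update function. -/
structure IEP (kin kout : ℕ) (Mem Extra Msg : Type*) where
  initMem : ℕ → Mem
  extra : EnvState kin kout → ℕ → Extra
  msg : ℕ → LState kin kout Mem Extra → Act → Reading kin kout × Extra → Option Msg
  upd : ℕ → LState kin kout Mem Extra → Act → Set Msg → Mem

/-- One round of the system: agents act, queues are updated (dequeues for agents that go,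
enqueues for new arrivals), new sensor readings are taken, messages are broadcast and
received subject to the transmission environment and the failure functions, and memories
are updated. -/
def step (E : IEP kin kout Mem Extra Msg) (P : Prot kin kout Mem Extra)
    (g : GState kin kout Mem Extra) : GState kin kout Mem Extra :=
  let e := g.1
  let act : ℕ → Act := fun i => P i (g.2 i)
  let q' : Fin kin → List ℕ := fun l =>
    let q1 := match (e.queue l).head? with
      | some i => if act i = Act.go then (e.queue l).tail else e.queue l
      | none => e.queue l
    if h : ∃ i l', e.adv.arrive i = (e.time + 1, l, l') then q1 ++ [h.choose] else q1
  let done' : Set ℕ := e.done ∪ {i | isFront e i ∧ act i = Act.go}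
  let e' : EnvState kin kout := ⟨e.adv, e.time + 1, q', done'⟩
  let sens : ℕ → Reading kin kout × Extra := fun i => (minimalReading e' i, E.extra e' i)
  let rcv : ℕ → Set Msg := fun i =>
    if e.adv.Fr e.time i = true ∧ (posAt e' i).isSome = true then
      {m | ∃ j pj pi, E.msg j (g.2 j) (act j) (sens j) = some m ∧
            e.adv.Ft e.time j = true ∧
            posAt e' j = some pj ∧ posAt e' i = some pi ∧ (pj, pi) ∈ e.adv.T}
    else ∅
  (e', fun i => (E.upd i (g.2 i) (act i) (rcv i), sens i))

/-- An intersection context: an information-exchange protocol together with an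
adversary model. -/
structure Ctx (kin kout : ℕ) (Mem Extra Msg : Type*) where
  iep : IEP kin kout Mem Extra Msg
  adv : Set (Adversary kin kout)

/-- Initial global states: time 0, empty queues, no departed agents, an adversary
from the adversary model, and initial local states. -/
def Init (C : Ctx kin kout Mem Extra Msg) (g : GState kin kout Mem Extra) : Prop :=
  g.1.adv ∈ C.adv ∧ g.1.time = 0 ∧ (∀ l, g.1.queue l = []) ∧ g.1.done = ∅ ∧
  ∀ i, g.2 i = (C.iep.initMem i, minimalReading g.1 i, C.iep.extra g.1 i)

/-- The interpreted system `I_{γ,P}`: the set of runs of protocol `P` in context `γ`. -/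
def Runs (C : Ctx kin kout Mem Extra Msg) (P : Prot kin kout Mem Extra) :
    Set (Run kin kout Mem Extra) :=
  {r | Init C (r 0) ∧ ∀ m, r (m + 1) = step C.iep P (r m)}

/-- `front_i` holds at the point `(r,m)`. -/
def frontAt (r : Run kin kout Mem Extra) (m i : ℕ) : Prop := isFront (r m).1 i

/-- `going_i` abbreviates `front_i ∧ ◯¬front_i`. -/
def goingAt (r : Run kin kout Mem Extra) (m i : ℕ) : Prop :=
  frontAt r m i ∧ ¬ frontAt r (m + 1) i

/-- `GO(r,m)`: the set of agents that go through the intersection in round `m+1`. -/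
def GOs (r : Run kin kout Mem Extra) (m : ℕ) : Set ℕ := {i | goingAt r m i}

/-- Validity: an agent goes through the intersection only from the front of its queue. -/
def ValidityP (C : Ctx kin kout Mem Extra Msg) (P : Prot kin kout Mem Extra) : Prop :=
  ∀ r ∈ Runs C P, ∀ m i, goingAt r m i → frontAt r m i

/-- Safety: agents that go simultaneously have compatible moves. -/
def SafetyP (O : Move kin kout → Move kin kout → Prop)
    (C : Ctx kin kout Mem Extra Msg) (P : Prot kin kout Mem Extra) : Prop :=
  ∀ r ∈ Runs C P, ∀ m i j, i ≠ j → goingAt r m i → goingAt r m j →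
    ∀ mi mj, moveAt (r m).1 i = some mi → moveAt (r m).1 j = some mj → O mi mj

/-- Liveness: every agent at the front of a queue eventually goes. -/
def LivenessP (C : Ctx kin kout Mem Extra Msg) (P : Prot kin kout Mem Extra) : Prop :=
  ∀ r ∈ Runs C P, ∀ m i, frontAt r m i → ∃ m' ≥ m, goingAt r m' i

/-- An intersection protocol: an action protocol satisfying Validity, Safety and Liveness. -/
def IsIntersectionProtocol (O : Move kin kout → Move kin kout → Prop)
    (C : Ctx kin kout Mem Extra Msg) (P : Prot kin kout Mem Extra) : Prop :=
  ValidityP C P ∧ SafetyP O C P ∧ LivenessP C P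

/-- `safe-to-go_i` at `(r,m)`: `i` is at the front of its queue (position 0) and the moves
of the agents in `GO(r,m) ∪ {i}` are pairwise compatible. -/
def safeToGo (O : Move kin kout → Move kin kout → Prop)
    (r : Run kin kout Mem Extra) (m i : ℕ) : Prop :=
  (∃ p, posAt (r m).1 i = some p ∧ p.2 = 0) ∧
  ∀ j ∈ GOs r m ∪ {i}, ∀ k ∈ GOs r m ∪ {i}, j ≠ k →
    ∀ mj mk, moveAt (r m).1 j = some mj → moveAt (r m).1 k = some mk → O mj mk

/-- `P` has unnecessary waiting with respect to `γ`. -/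
def UnnecessaryWaiting (O : Move kin kout → Move kin kout → Prop)
    (C : Ctx kin kout Mem Extra Msg) (P : Prot kin kout Mem Extra) : Prop :=
  ∃ r ∈ Runs C P, ∃ m i, safeToGo O r m i ∧ i ∉ GOs r m

/-- The time at which agent `i` goes through the intersection in run `r` (∞ if never). -/
def gotime (r : Run kin kout Mem Extra) (i : ℕ) : ℕ∞ :=
  sInf {n : ℕ∞ | ∃ m : ℕ, goingAt r m i ∧ n = (m : ℕ∞)}

/-- `P` dominates `P'`: on all corresponding runs, every agent goes at least as early. -/
def Dominates (C : Ctx kin kout Mem Extra Msg) (P P' : Prot kin kout Mem Extra) : Prop :=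
  ∀ r ∈ Runs C P, ∀ r' ∈ Runs C P', r 0 = r' 0 → ∀ i, gotime r i ≤ gotime r' i

def StrictDominates (C : Ctx kin kout Mem Extra Msg) (P P' : Prot kin kout Mem Extra) : Prop :=
  Dominates C P P' ∧ ¬ Dominates C P' P

/-- `P` is optimal: no intersection protocol strictly dominates it. -/
def Optimal (O : Move kin kout → Move kin kout → Prop)
    (C : Ctx kin kout Mem Extra Msg) (P : Prot kin kout Mem Extra) : Prop :=
  ¬ ∃ P' : Prot kin kout Mem Extra,
      IsIntersectionProtocol O C P' ∧ StrictDominates C P' P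

/-- `P` lexicographically dominates `P'`. -/
def LexDominates (C : Ctx kin kout Mem Extra Msg) (P P' : Prot kin kout Mem Extra) : Prop :=
  ∀ r ∈ Runs C P, ∀ r' ∈ Runs C P', r 0 = r' 0 →
    (∀ m, GOs r m = GOs r' m) ∨
    ∃ m, (∀ k < m, GOs r k = GOs r' k) ∧ GOs r m ≠ GOs r' m ∧ GOs r' m ⊂ GOs r m

def StrictLexDominates (C : Ctx kin kout Mem Extra Msg) (P P' : Prot kin kout Mem Extra) :
    Prop :=
  LexDominates C P P' ∧ ¬ LexDominates C P' P

/-- `P` is lexicographically optimal: no intersection protocol strictly lexicographically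
dominates it. -/
def LexOptimal (O : Move kin kout → Move kin kout → Prop)
    (C : Ctx kin kout Mem Extra Msg) (P : Prot kin kout Mem Extra) : Prop :=
  ¬ ∃ P' : Prot kin kout Mem Extra,
      IsIntersectionProtocol O C P' ∧ StrictLexDominates C P' P

/-- Knowledge: `K_i φ` holds at `(r,m)` iff `φ` holds at all points of the system where
agent `i` has the same local state. -/
def Kn (S : Set (Run kin kout Mem Extra)) (i : ℕ)
    (φ : Run kin kout Mem Extra → ℕ → Prop) (r : Run kin kout Mem Extra) (m : ℕ) : Prop :=
  ∀ r' ∈ S, ∀ m', (r' m').2 i = (r m).2 i → φ r' m'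

/-- The adversary model has no failures. -/
def NoFailures (C : Ctx kin kout Mem Extra Msg) : Prop :=
  ∀ α ∈ C.adv, ∀ k i, α.Ft k i = true ∧ α.Fr k i = true

/-- Full information exchange: every agent broadcasts (an injective encoding of) its
entire local state in every round, and records every broadcast it receives. -/
def FullInfo (C : Ctx kin kout Mem Extra Msg) : Prop :=
  (∃ enc : LState kin kout Mem Extra → Msg, Function.Injective enc ∧
      ∀ i s a o, C.iep.msg i s a o = some (enc s)) ∧
  (∀ i s a, Function.Injective fun B : Set Msg => C.iep.upd i s a B)

/-- A sufficiently rich context: every agent that will be at the front of some lane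
broadcasts a message encoding its lane and intent, tagged as coming from the front;
no other message is tagged as a front message; and each agent records the
(lane, intent) pair of each front agent it hears from. -/
def SufficientlyRich (C : Ctx kin kout Mem Extra Msg) : Prop :=
  ∃ dec : Msg → Option (Move kin kout),
    (∀ i s a (o : Reading kin kout × Extra) (l : Fin kin),
        o.1.front → o.1.lane = LaneStatus.inLane l →
        ∃ msg, C.iep.msg i s a o = some msg ∧ dec msg = some (l, o.1.intent)) ∧
    (∀ i s a (o : Reading kin kout × Extra), ¬ o.1.front →
        ∀ msg, C.iep.msg i s a o = some msg → dec msg = none) ∧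
    (∃ rec : Mem → Set (Move kin kout),
        ∀ i s a B, rec (C.iep.upd i s a B) = {mv | ∃ msg ∈ B, dec msg = some mv})

/-- The set of agents at the front of a queue. -/
def FrontSet (e : EnvState kin kout) : Set ℕ := {i | isFront e i}

/-- `P` depends only on the agents at the front of their queues. -/
def DependsOnlyOnFront (C : Ctx kin kout Mem Extra Msg) (P : Prot kin kout Mem Extra) :
    Prop :=
  ∀ r ∈ Runs C P, ∀ r' ∈ Runs C P, ∀ m m' i,
    FrontSet (r m).1 = FrontSet (r' m').1 → P i ((r m).2 i) = P i ((r' m').2 i)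

/-- The choices of an adversary in a single round: arrivals, the transmission
environment and the failure values. -/
structure Choice (kin kout : ℕ) where
  arrivals : Set (ℕ × Fin kin × Fin kout)
  T : Set ((Fin kin × ℕ) × (Fin kin × ℕ))
  Ft : ℕ → Bool
  Fr : ℕ → Bool

/-- The choices of adversary `α` in round `m+1`. -/
def choiceAt (α : Adversary kin kout) (m : ℕ) : Choice kin kout where
  arrivals := {p | α.arrive p.1 = (m + 1, p.2.1, p.2.2)}
  T := α.T
  Ft := fun i => α.Ft m i
  Fr := fun i => α.Fr m i

/-- The adversary history `H(α,m) = ⟨α_0, …, α_{m-1}⟩`. -/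
def hist (α : Adversary kin kout) (m : ℕ) : List (Choice kin kout) :=
  (List.range m).map (choiceAt α)

/-- The adversary history of run `r` up to time `m`. -/
def histOf (r : Run kin kout Mem Extra) (m : ℕ) : List (Choice kin kout) :=
  hist (r 0).1.adv m

/-- An intersection policy: a map from adversary histories to sets of permitted moves. -/
abbrev Policy (kin kout : ℕ) := List (Choice kin kout) → Set (Move kin kout)

/-- The set `H_γ` of adversary histories of the context. -/
def Hists (C : Ctx kin kout Mem Extra Msg) : Set (List (Choice kin kout)) :=
  {h | ∃ α ∈ C.adv, ∃ m, h = hist α m}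

/-- A feasible infinite sequence of histories: one arising from a single adversary. -/
def Feasible (F : Set (Adversary kin kout)) (h : ℕ → List (Choice kin kout)) : Prop :=
  ∃ α ∈ F, ∀ m, h m = hist α m

/-- Conflict-freedom of an intersection policy. -/
def ConflictFree (O : Move kin kout → Move kin kout → Prop)
    (C : Ctx kin kout Mem Extra Msg) (σ : Policy kin kout) : Prop :=
  ∀ h ∈ Hists C, ∀ mv ∈ σ h, ∀ mv' ∈ σ h, mv ≠ mv' → O mv mv'

/-- Fairness of an intersection policy. -/
def FairPolicy (C : Ctx kin kout Mem Extra Msg) (σ : Policy kin kout) : Prop :=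
  ∀ h : ℕ → List (Choice kin kout), Feasible C.adv h →
    ∀ mv : Move kin kout, ∀ m, ∃ m' ≥ m, mv ∈ σ (h m')

/-- A correct intersection policy: conflict-free and fair. -/
def CorrectPolicy (O : Move kin kout → Move kin kout → Prop)
    (C : Ctx kin kout Mem Extra Msg) (σ : Policy kin kout) : Prop :=
  ConflictFree O C σ ∧ FairPolicy C σ

/-- A synchronous context: the time is encoded in each agent's local state. -/
def Synchronous (C : Ctx kin kout Mem Extra Msg) : Prop :=
  ∃ clock : LState kin kout Mem Extra → ℕ,
    ∀ P : Prot kin kout Mem Extra, ∀ r ∈ Runs C P, ∀ m i, clock ((r m).2 i) = m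

/-- The knowledge condition of the knowledge-based program `P^σ`:
`front_i ∧ (lane_i, intent_i) ∈ σ`. -/
def phiSigma (σ : Policy kin kout) (i : ℕ) (r : Run kin kout Mem Extra) (m : ℕ) : Prop :=
  frontAt r m i ∧ ∃ mv, moveAt (r m).1 i = some mv ∧ mv ∈ σ (histOf r m)

/-- `P` implements the knowledge-based program `if K_i φ_i then go else noop` in `γ`. -/
def Implements (C : Ctx kin kout Mem Extra Msg) (P : Prot kin kout Mem Extra)
    (φ : ℕ → Run kin kout Mem Extra → ℕ → Prop) : Prop :=
  ∀ r ∈ Runs C P, ∀ m i, (P i ((r m).2 i) = Act.go ↔ Kn (Runs C P) i (φ i) r m)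

/-- Behavioral equivalence: the protocols take the same actions at all reachable states. -/
def BehEq (C : Ctx kin kout Mem Extra Msg) (P P' : Prot kin kout Mem Extra) : Prop :=
  (∀ r ∈ Runs C P, ∀ m i, P i ((r m).2 i) = P' i ((r m).2 i)) ∧
  (∀ r ∈ Runs C P', ∀ m i, P i ((r m).2 i) = P' i ((r m).2 i))

/-- `γ` is `σ`-aware. -/
def SigmaAware (C : Ctx kin kout Mem Extra Msg) (σ : Policy kin kout) : Prop :=
  ∀ P : Prot kin kout Mem Extra, ∀ r ∈ Runs C P, ∀ m i (l : Fin kin) (l' : Fin kout),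
    (l, l') ∈ σ (histOf r m) → i ∈ (r m).1.queue l →
    Kn (Runs C P) i (fun r' m' => (l, l') ∈ σ (histOf r' m')) r m

/-- `γ` is `next`-aware. -/
def NextAware (C : Ctx kin kout Mem Extra Msg)
    (next : List (Choice kin kout) → Fin kin) : Prop :=
  ∀ P : Prot kin kout Mem Extra, ∀ r ∈ Runs C P, ∀ m i (l : Fin kin),
    next (histOf r m) = l →
    Kn (Runs C P) i (fun r' m' => next (histOf r' m') = l) r m

/-- Cyclic distance from `a` to `b` (mod `kin`). -/
def distC (a b : Fin kin) : ℕ := (b.val + kin - a.val) % kin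

/-- `l` lies in the cyclic interval `[a, b)` of incoming lanes. -/
def inCyc (a b l : Fin kin) : Prop := distC a l < distC a b

/-- `mv` is compatible with every move in `S`. -/
def compatAll (O : Move kin kout → Move kin kout → Prop)
    (S : Set (Move kin kout)) (mv : Move kin kout) : Prop :=
  ∀ mv' ∈ S, O mv mv'

/-- The proposition `V_i` of the knowledge-based program `𝐏`. -/
def Vprop (O : Move kin kout → Move kin kout → Prop) (σ : Policy kin kout)
    (next : List (Choice kin kout) → Fin kin) (i : ℕ)
    (r : Run kin kout Mem Extra) (m : ℕ) : Prop :=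
  ∃ mv, moveAt (r m).1 i = some mv ∧ mv ∉ σ (histOf r m) ∧
    (∀ j mj, goingAt r m j → moveAt (r m).1 j = some mj →
        mj ∈ σ (histOf r m) → O mv mj) ∧
    (∀ j mj, j ≠ i → goingAt r m j → moveAt (r m).1 j = some mj →
        mj ∉ σ (histOf r m) → inCyc (next (histOf r m)) mv.1 mj.1 → O mv mj)

/-- The knowledge condition of the knowledge-based program `𝐏`:
`front_i ∧ ((lane_i, intent_i) ∈ σ ∨ V_i)`. -/
def phiP (O : Move kin kout → Move kin kout → Prop) (σ : Policy kin kout)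
    (next : List (Choice kin kout) → Fin kin) (i : ℕ)
    (r : Run kin kout Mem Extra) (m : ℕ) : Prop :=
  frontAt r m i ∧
    ((∃ mv, moveAt (r m).1 i = some mv ∧ mv ∈ σ (histOf r m)) ∨ Vprop O σ next i r m)

/-- Fairness of a `next` function. -/
def FairNext (C : Ctx kin kout Mem Extra Msg)
    (next : List (Choice kin kout) → Fin kin) : Prop :=
  ∀ h : ℕ → List (Choice kin kout), Feasible C.adv h →
    ∀ m (l : Fin kin), ∃ m' ≥ m, next (h m') = l

/-- Fairness of a pair `(σ, next)`. -/
def PairFair (O : Move kin kout → Move kin kout → Prop)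
    (C : Ctx kin kout Mem Extra Msg) (σ : Policy kin kout)
    (next : List (Choice kin kout) → Fin kin) : Prop :=
  ∀ h : ℕ → List (Choice kin kout), Feasible C.adv h →
    ∀ m (mv : Move kin kout), ∃ m' ≥ m,
      mv ∈ σ (h m') ∨ (next (h m') = mv.1 ∧ compatAll O (σ (h m')) mv)

/-- `next(h) = |h| mod |L_in|` at time `t`. -/
def nextL (hkin : 0 < kin) (t : ℕ) : Fin kin := ⟨t % kin, Nat.mod_lt _ hkin⟩

/-- The stages of the construction of the set `Pos_i`, starting from the lane `nxt` and
proceeding in cyclic order; `M` is the set of moves received from front agents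
(empty when there is no communication). -/
def posStage (hkin : 0 < kin) (O : Move kin kout → Move kin kout → Prop)
    (M : Set (Move kin kout)) (nxt : Fin kin) : ℕ → Set (Move kin kout)
  | 0 => ∅
  | t + 1 =>
    let S := posStage hkin O M nxt t
    let l : Fin kin := ⟨(nxt.val + t) % kin, Nat.mod_lt _ hkin⟩
    if ∃ l' : Fin kout, (l, l') ∈ M then
      S ∪ {mv | mv.1 = l ∧ mv ∈ M ∧ compatAll O S mv}
    else
      S ∪ {mv | mv.1 = l ∧ compatAll O S mv}

/-- The set `Pos_i` computed from the received moves `M`, the lane `nxt = next` and the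
agent's own lane `lanei`. -/
def PosSet (hkin : 0 < kin) (O : Move kin kout → Move kin kout → Prop)
    (M : Set (Move kin kout)) (nxt lanei : Fin kin) : Set (Move kin kout) :=
  posStage hkin O M nxt (distC nxt lanei)

/-- The stage `Pos_i^l` of the construction of `Pos_i`, for a lane `l` in the cyclic
interval `[nxt, lane_i)`. -/
def PosUpTo (hkin : 0 < kin) (O : Move kin kout → Move kin kout → Prop)
    (M : Set (Move kin kout)) (nxt l : Fin kin) : Set (Move kin kout) :=
  posStage hkin O M nxt (distC nxt l + 1)

/-- The adversary model with no failures. -/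
def NFadv (kin kout : ℕ) : Set (Adversary kin kout) :=
  {α | ∀ k i, α.Ft k i = true ∧ α.Fr k i = true}

/-- The adversary model with crash failures. -/
def CRadv (kin kout : ℕ) : Set (Adversary kin kout) :=
  {α | (∀ k i, α.Fr k i = true) ∧
    ∀ k i, α.Ft k i = false → ∀ k', k < k' → α.Ft k' i = false}

/-- The adversary model with sending omissions. -/
def SOadv (kin kout : ℕ) : Set (Adversary kin kout) :=
  {α | ∀ k i, α.Fr k i = true}

/-- The information-exchange protocol of `γ_∅`: a single memory state, no messages,
and sensor readings `⟨front_i, lane_i, intent_i, time_i⟩`. -/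
def E0 (kin kout : ℕ) : IEP kin kout Unit ℕ Empty where
  initMem _ := ()
  extra e _ := e.time
  msg _ _ _ _ := none
  upd _ _ _ _ := ()

/-- The context `γ_∅(F)`. -/
def gammaEmpty (kin kout : ℕ) (F : Set (Adversary kin kout)) : Ctx kin kout Unit ℕ Empty :=
  ⟨E0 kin kout, F⟩

/-- The protocol `P^∅`: go iff at the front and own move compatible with `Pos_i`. -/
def Pempty (hkin : 0 < kin) (O : Move kin kout → Move kin kout → Prop) :
    Prot kin kout Unit ℕ := fun _ s =>
  match s.2.1.lane with
  | LaneStatus.inLane l =>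
      if s.2.1.front ∧ compatAll O (PosSet hkin O ∅ (nextL hkin s.2.2) l) (l, s.2.1.intent)
      then Act.go else Act.noop
  | _ => Act.noop

/-- The information-exchange protocol of `γ_intent`: exactly the agents at the front of a
lane broadcast `(lane_i, intent_i)`; the memory is the set of moves received in the
current round; sensor readings are `⟨front_i, lane_i, intent_i, time_i⟩`. -/
def Eintent (kin kout : ℕ) : IEP kin kout (Set (Move kin kout)) ℕ (Move kin kout) where
  initMem _ := ∅
  extra e _ := e.time
  msg _ _ _ o :=
    if o.1.front then
      match o.1.lane with
      | LaneStatus.inLane l => some (l, o.1.intent)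
      | _ => none
    else none
  upd _ _ _ B := B

/-- The context `γ_intent(F)`. -/
def gammaIntent (kin kout : ℕ) (F : Set (Adversary kin kout)) :
    Ctx kin kout (Set (Move kin kout)) ℕ (Move kin kout) :=
  ⟨Eintent kin kout, F⟩

/-- The protocol `P^intent`: go iff at the front and own move compatible with `Pos_i`
computed from the received moves. -/
def Pintent (hkin : 0 < kin) (O : Move kin kout → Move kin kout → Prop) :
    Prot kin kout (Set (Move kin kout)) ℕ := fun _ s =>
  match s.2.1.lane with
  | LaneStatus.inLane l =>
      if s.2.1.front ∧
          compatAll O (PosSet hkin O s.1 (nextL hkin s.2.2) l) (l, s.2.1.intent)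
      then Act.go else Act.noop
  | _ => Act.noop

end Inter

open Inter

theorem Nat.exists_ge_mod_eq_div_mod_eq (m : ℕ) {k n r l : ℕ} (hr : r < k) (hl : l < n) :
    ∃ m' ≥ m, m' % k = r ∧ m' / k % n = l := by
  refine ⟨(m * n + l) * k + r, ?_, ?_, ?_⟩
  · calc m ≤ m * n := Nat.le_mul_of_pos_right m (by omega)
      _ ≤ m * n * k := Nat.le_mul_of_pos_right _ (by omega)
      _ ≤ (m * n + l) * k + r := Nat.le_add_right_of_le (by gcongr; omega)
  · rw [Nat.add_comm, Nat.add_mul_mod_self_right, Nat.mod_eq_of_lt hr]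
  · rw [Nat.add_comm, Nat.add_mul_div_right _ _ (by omega), Nat.div_eq_of_lt hr, Nat.zero_add,
      Nat.mul_add_mod', Nat.mod_eq_of_lt hl]

@[simp]
theorem Inter.length_hist {kin kout : ℕ} (α : Adversary kin kout) (m : ℕ) :
    (hist α m).length = m := by
  simp [hist]

theorem cyclic_nonexcluding_pair_fair_general
    {kin kout : ℕ} {Mem Extra Msg : Type*}
    (hkin : 0 < kin)
    (O : Move kin kout → Move kin kout → Prop)
    (C : Ctx kin kout Mem Extra Msg)
    (k : ℕ) (hk : 0 < k) (σ : Policy kin kout)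
    (hcyc : ∀ h h' : List (Choice kin kout), h.length % k = h'.length % k → σ h = σ h')
    (hnex : ∀ mv : Move kin kout, ∃ h : List (Choice kin kout), compatAll O (σ h) mv) :
    PairFair O C σ (fun h => ⟨(h.length / k) % kin, Nat.mod_lt _ hkin⟩) := by
  rintro h ⟨α, -, hh⟩ m mv
  obtain ⟨h₀, hcompat⟩ := hnex mv
  -- A time `m' ≥ m` at which the cycle is in the phase of `h₀` and `next` points to `mv.1`.
  obtain ⟨m', hm', hphase, hlane⟩ :=
    Nat.exists_ge_mod_eq_div_mod_eq m (Nat.mod_lt h₀.length hk) mv.1.isLt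
  have hσ : σ (h m') = σ h₀ := hcyc _ _ (by rw [hh, length_hist, hphase])
  refine ⟨m', hm', Or.inr ⟨Fin.ext ?_, hσ ▸ hcompat⟩⟩
  simpa only [hh, length_hist] using hlane

/-- If `σ` is cyclic with cycle length `k` and non-excluding, and
`next(h) = ⌊|h|/k⌋ mod |L_in|`, then the pair `(σ, next)` is fair. -/
theorem cyclic_nonexcluding_pair_fair
    {kin kout : ℕ} {Mem Extra Msg : Type*}
    (hkin : 0 < kin)
    (O : Move kin kout → Move kin kout → Prop)
    (hO : ∀ a b, O a b → O b a)
    (C : Ctx kin kout Mem Extra Msg)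
    (k : ℕ) (hk : 0 < k) (σ : Policy kin kout)
    (hcyc : ∀ h h' : List (Choice kin kout), h.length % k = h'.length % k → σ h = σ h')
    (hnex : ∀ mv : Move kin kout, ∃ h : List (Choice kin kout), compatAll O (σ h) mv) :
    PairFair O C σ (fun h => ⟨(h.length / k) % kin, Nat.mod_lt _ hkin⟩) :=
  cyclic_nonexcluding_pair_fair_general hkin O C k hk σ hcyc hnex
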